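/- For every feasible allocation (u_1,...,u_n) ∈ U_n and every prefix length 1 ≤ k ≤ n, the partial sums satisfy ∑_{j=1}^k u_j ≤ k with equality whenever u_k ≠ 0; in particular every feasible allocation is a Dyck path of order n that hits the diagonal after each nonzero jump. -/

import Mathlib

/-- Allowed nonzero jump size at position `i` of a feasible allocation: `i - j` where
`j` is the last earlier position with a nonzero entry (so the maximal run of zeros
immediately before position `i` has length `k − 1` and the allowed value is `k`),
and `i + 1` if all earlier entries are zero. -/
def allowedJump {n : ℕ} (u : Fin n → ℕ) (i : Fin n) : ℕ :=
  if h : (Finset.univ.filter (fun j => j < i ∧ u j ≠ 0)).Nonempty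
  then (i : ℕ) - ((Finset.univ.filter (fun j => j < i ∧ u j ≠ 0)).max' h : ℕ)
  else (i : ℕ) + 1

/-- A feasible allocation of order `n`: a tuple of naturals summing to `n`, each
entry being `0` or the allowed jump size. -/
def Feasible {n : ℕ} (u : Fin n → ℕ) : Prop :=
  (∑ j, u j = n) ∧ ∀ i, u i = 0 ∨ u i = allowedJump u i

/-- Every feasible allocation is a Dyck path of order `n` that hits the diagonal
after each nonzero jump: all prefix sums satisfy `∑_{j=1}^k u_j ≤ k`, with equality
whenever `u_k ≠ 0`. -/
theorem feasible_is_dyck_hitting_diagonal (n : ℕ) (hn : 1 ≤ n) (u : Fin n → ℕ)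
    (hu : Feasible u) :
    ∀ k : Fin n,
      (∑ j ∈ Finset.univ.filter (fun j => j ≤ k), u j ≤ (k : ℕ) + 1) ∧
      (u k ≠ 0 → ∑ j ∈ Finset.univ.filter (fun j => j ≤ k), u j = (k : ℕ) + 1) := by
  obtain ⟨-, hjump⟩ := hu
  suffices H : ∀ m : ℕ, ∀ k : Fin n, (k : ℕ) = m →
      (∑ j ∈ Finset.univ.filter (fun j => j ≤ k), u j ≤ (k : ℕ) + 1) ∧
      (u k ≠ 0 → ∑ j ∈ Finset.univ.filter (fun j => j ≤ k), u j = (k : ℕ) + 1) by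
    intro k; exact H k k rfl
  intro m
  induction m using Nat.strong_induction_on with
  | _ m ih =>
  intro k hk
  have hsplit : ∑ j ∈ Finset.univ.filter (fun j => j ≤ k), u j
      = (∑ j ∈ Finset.univ.filter (fun j => j < k), u j) + u k := by
    have hins : Finset.univ.filter (fun j => j ≤ k)
        = insert k (Finset.univ.filter (fun j => j < k)) := by
      ext x
      simp only [Finset.mem_filter, Finset.mem_univ, true_and, Finset.mem_insert]
      constructor
      · intro h; rcases eq_or_lt_of_le h with h | h
        · exact Or.inl h
        · exact Or.inr h
      · rintro (rfl | h)
        · exact le_refl _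
        · exact le_of_lt h
    rw [hins, Finset.sum_insert (by simp)]
    ring
  rcases hjump k with h0 | hA
  · -- u k = 0
    refine ⟨?_, fun h => absurd h0 h⟩
    rw [hsplit, h0, add_zero]
    have hlt : ∑ j ∈ Finset.univ.filter (fun j => j < k), u j ≤ (k : ℕ) := by
      rcases Nat.eq_zero_or_pos (k : ℕ) with hk0 | hkpos
      · have hemp : Finset.univ.filter (fun j => j < k) = ∅ := by
          ext x
          simp only [Finset.mem_filter, Finset.mem_univ, true_and, Finset.notMem_empty,
            iff_false]
          intro hx
          have : (x : ℕ) < (k : ℕ) := hx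
          omega
        simp [hemp]
      · set k' : Fin n := ⟨(k : ℕ) - 1, by omega⟩ with hk'
        have hfe : Finset.univ.filter (fun j => j < k)
            = Finset.univ.filter (fun j => j ≤ k') := by
          ext x
          simp only [Finset.mem_filter, Finset.mem_univ, true_and]
          constructor
          · intro hx
            have : (x : ℕ) < (k : ℕ) := hx
            show (x : ℕ) ≤ (k' : ℕ); simp [hk']; omega
          · intro hx
            have : (x : ℕ) ≤ (k' : ℕ) := hx
            show (x : ℕ) < (k : ℕ); simp [hk'] at this; omega
        rw [hfe]
        have := (ih (k' : ℕ) (by simp [hk']; omega) k' rfl).1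
        simp only [hk'] at this ⊢
        omega
    omega
  · -- u k = allowedJump u k
    by_cases hT : (Finset.univ.filter (fun j => j < k ∧ u j ≠ 0)).Nonempty
    · set j := (Finset.univ.filter (fun j => j < k ∧ u j ≠ 0)).max' hT with hj
      have hjmem := Finset.max'_mem _ hT
      simp only [Finset.mem_filter, Finset.mem_univ, true_and] at hjmem
      obtain ⟨hjk, hju⟩ := hjmem
      have hval : u k = (k : ℕ) - (j : ℕ) := by rw [hA, allowedJump, dif_pos hT]
      have hjklt : (j : ℕ) < (k : ℕ) := hjk
      have hIH := (ih (j : ℕ) (by omega) j rfl).2 hju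
      have hsub : Finset.univ.filter (fun i => i ≤ j) ⊆ Finset.univ.filter (fun i => i < k) := by
        intro x hx
        simp only [Finset.mem_filter, Finset.mem_univ, true_and] at hx ⊢
        exact lt_of_le_of_lt hx hjk
      have hzero : ∀ x ∈ Finset.univ.filter (fun i => i < k),
          x ∉ Finset.univ.filter (fun i => i ≤ j) → u x = 0 := by
        intro x hx hx'
        simp only [Finset.mem_filter, Finset.mem_univ, true_and] at hx hx'
        by_contra hux
        exact hx' (Finset.le_max' _ x (by simp [hx, hux]))
      have heq : ∑ i ∈ Finset.univ.filter (fun i => i < k), u i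
          = ∑ i ∈ Finset.univ.filter (fun i => i ≤ j), u i :=
        (Finset.sum_subset hsub hzero).symm
      have hfin : ∑ i ∈ Finset.univ.filter (fun i => i ≤ k), u i = (k : ℕ) + 1 := by
        rw [hsplit, heq, hIH, hval]; omega
      exact ⟨le_of_eq hfin, fun _ => hfin⟩
    · have hval : u k = (k : ℕ) + 1 := by rw [hA, allowedJump, dif_neg hT]
      have hzero : ∀ x ∈ Finset.univ.filter (fun i => i < k), u x = 0 := by
        intro x hx
        simp only [Finset.mem_filter, Finset.mem_univ, true_and] at hx
        by_contra hux
        exact hT ⟨x, by simp [hx, hux]⟩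
      have hfin : ∑ i ∈ Finset.univ.filter (fun i => i ≤ k), u i = (k : ℕ) + 1 := by
        rw [hsplit, Finset.sum_eq_zero hzero, hval]; omega
      exact ⟨le_of_eq hfin, fun _ => hfin⟩
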